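/- Let N ≥ 1, s ∈ (0,1), let G be a Young function satisfying the growth condition with exponents 1 < p⁻ ≤ p⁺ < ∞, and let Ω ⊆ ℝ^N be a nonempty open proper subset, with δ(x) := dist(x, ∂Ω). Assume there is c₁ > 0 such that ∫_{ℝ^N∖Ω} |x−y|^{−(N+sp⁻)} dy ≤ c₁ δ(x)^{−sp⁻} for every x ∈ Ω. Then for every measurable u : ℝ^N → [0,∞) vanishing outside Ω, ∫_Ω ∫_{ℝ^N∖Ω} G(u(x)/|x−y|^s) |x−y|^{−N} dy dx ≤ c₁ ∫_Ω G(u(x)/δ(x)^s) dx. -/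

import Mathlib

open MeasureTheory Metric Set Filter
open scoped ENNReal Topology

/-- The volume of the unit ball in `ℝ^N`. -/
noncomputable def ballVol (N : ℕ) : ℝ≥0∞ :=
  volume (Metric.ball (0 : EuclideanSpace ℝ (Fin N)) 1)

/-- The symmetric rearrangement `Ω*` of a set: the open ball centered at the origin
with the same volume. -/
noncomputable def rearrangeSet {N : ℕ} (Ω : Set (EuclideanSpace ℝ (Fin N))) :
    Set (EuclideanSpace ℝ (Fin N)) :=
  Metric.ball 0 (((volume Ω).toReal / (ballVol N).toReal) ^ ((N : ℝ)⁻¹))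

/-- The symmetric decreasing rearrangement `u*` of a nonnegative function:
`u* x = sup {t > 0 : |{u > t}| > α_N |x|^N}` (with `sup ∅ = 0`). -/
noncomputable def rearrangeFun {N : ℕ} (u : EuclideanSpace ℝ (Fin N) → ℝ)
    (x : EuclideanSpace ℝ (Fin N)) : ℝ :=
  sSup {t : ℝ | 0 < t ∧ ballVol N * ENNReal.ofReal (‖x‖ ^ N) < volume {y | t < u y}}

/-- `G` is a Young function with right-continuous nondecreasing density `g`. -/
structure IsYoungPair (G g : ℝ → ℝ) : Prop where
  g_zero : g 0 = 0
  g_pos : ∀ t > 0, 0 < g t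
  g_mono : MonotoneOn g (Set.Ici 0)
  g_rightCont : ∀ t ≥ 0, ContinuousWithinAt g (Set.Ici t) t
  g_tendsto : Filter.Tendsto g Filter.atTop Filter.atTop
  G_eq : ∀ t ≥ 0, G t = ∫ τ in (0:ℝ)..t, g τ

/-- The growth condition `pm ≤ t g(t)/G(t) ≤ pp` with exponents `1 < pm ≤ pp < ∞`. -/
def GrowthCond (G g : ℝ → ℝ) (pm pp : ℝ) : Prop :=
  1 < pm ∧ pm ≤ pp ∧ ∀ t > 0, pm * G t ≤ t * g t ∧ t * g t ≤ pp * G t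

/-- The fractional Orlicz–Sobolev seminorm
`∬_{A×B} G(|u x − u y|/|x−y|^s) |x−y|^{−N} dx dy`. -/
noncomputable def fracSeminorm {N : ℕ} (s : ℝ) (G : ℝ → ℝ)
    (u : EuclideanSpace ℝ (Fin N) → ℝ) (A B : Set (EuclideanSpace ℝ (Fin N))) : ℝ≥0∞ :=
  ∫⁻ x in A, ∫⁻ y in B,
    ENNReal.ofReal (G (|u x - u y| / dist x y ^ s) / dist x y ^ (N : ℝ))

/-- `u ∈ C_c^∞(Ω)`. -/
def IsTestFun {N : ℕ} (Ω : Set (EuclideanSpace ℝ (Fin N)))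
    (u : EuclideanSpace ℝ (Fin N) → ℝ) : Prop :=
  ContDiff ℝ (⊤ : ℕ∞) u ∧ HasCompactSupport u ∧ tsupport u ⊆ Ω

section aux
variable {G g : ℝ → ℝ} {pm pp : ℝ}

lemma g_nonneg' (hY : IsYoungPair G g) (t : ℝ) (ht : 0 ≤ t) : 0 ≤ g t := by
  have := hY.g_mono (le_refl (0:ℝ) : (0:ℝ) ∈ Set.Ici 0) (ht : t ∈ Set.Ici 0) ht
  simpa [hY.g_zero] using this

lemma g_intInt (hY : IsYoungPair G g) (a b : ℝ) (ha : 0 ≤ a) (hab : a ≤ b) : IntervalIntegrable g volume a b := by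
  apply MonotoneOn.intervalIntegrable
  intro x hx y hy hxy
  rw [Set.uIcc_of_le hab] at hx hy
  exact hY.g_mono (le_trans ha hx.1) (le_trans ha hy.1) hxy

lemma G_sub (hY : IsYoungPair G g) (a b : ℝ) (ha : 0 ≤ a) (hab : a ≤ b) : G b - G a = ∫ τ in a..b, g τ := by
  rw [hY.G_eq a ha, hY.G_eq b (le_trans ha hab)]
  rw [← intervalIntegral.integral_add_adjacent_intervals (g_intInt hY 0 a le_rfl ha)
    (g_intInt hY a b ha hab)]
  ring

lemma G_nonneg (hY : IsYoungPair G g) (t : ℝ) (ht : 0 ≤ t) : 0 ≤ G t := by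
  rw [hY.G_eq t ht]
  apply intervalIntegral.integral_nonneg ht
  intro x hx; exact g_nonneg' hY x hx.1

lemma G_mono (hY : IsYoungPair G g) (a b : ℝ) (ha : 0 ≤ a) (hab : a ≤ b) : G a ≤ G b := by
  have h := G_sub hY a b ha hab
  have : 0 ≤ ∫ τ in a..b, g τ := by
    apply intervalIntegral.integral_nonneg hab
    intro x hx; exact g_nonneg' hY x (le_trans ha hx.1)
  linarith

lemma G_zero (hY : IsYoungPair G g) : G 0 = 0 := by simpa using hY.G_eq 0 le_rfl

lemma step_lemma (hY : IsYoungPair G g) (hG : GrowthCond G g pm pp) {a b : ℝ} (ha : 0 < a) (hab : a ≤ b) :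
    (1 + pm * (Real.log b - Real.log a)) * G a ≤ G b := by
  have hGa : 0 ≤ G a := G_nonneg hY a ha.le
  have key : pm * G a * (Real.log b - Real.log a) ≤ G b - G a := by
    rw [G_sub hY a b ha.le hab]
    have h1 : ∫ τ in a..b, (pm * G a) * (1 / τ) ≤ ∫ τ in a..b, g τ := by
      apply intervalIntegral.integral_mono_on hab
      · apply ContinuousOn.intervalIntegrable
        apply ContinuousOn.mul continuousOn_const
        apply ContinuousOn.div continuousOn_const continuousOn_id
        intro x hx
        rw [Set.uIcc_of_le hab] at hx
        exact ne_of_gt (lt_of_lt_of_le ha hx.1)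
      · exact g_intInt hY a b ha.le hab
      · intro τ hτ
        have hτ0 : 0 < τ := lt_of_lt_of_le ha hτ.1
        have h2 := (hG.2.2 τ hτ0).1
        have h3 : G a ≤ G τ := G_mono hY a τ ha.le hτ.1
        have hpm : 0 < pm := lt_trans one_pos hG.1
        calc pm * G a * (1 / τ) ≤ pm * G τ * (1/τ) := by
              apply mul_le_mul_of_nonneg_right _ (by positivity)
              exact mul_le_mul_of_nonneg_left h3 hpm.le
          _ ≤ g τ := by
              rw [mul_one_div, div_le_iff₀ hτ0]; linarith [h2]
    calc pm * G a * (Real.log b - Real.log a)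
        = (pm * G a) * Real.log (b/a) := by rw [Real.log_div (ne_of_gt (lt_of_lt_of_le ha hab)) (ne_of_gt ha)]
      _ = ∫ τ in a..b, (pm * G a) * (1/τ) := by
          rw [intervalIntegral.integral_const_mul, integral_one_div]
          rw [Set.uIcc_of_le hab]
          intro h; exact absurd h.1 (not_le.2 ha)
      _ ≤ ∫ τ in a..b, g τ := h1
  nlinarith [key]

lemma iter_lemma (hY : IsYoungPair G g) (hG : GrowthCond G g pm pp) (n : ℕ) {a x : ℝ} (ha : 0 < a) (hx : 0 ≤ x) :
    (1 + pm * x) ^ n * G a ≤ G (a * Real.exp (n * x)) := by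
  induction n with
  | zero => simp
  | succ n ih =>
    have hpm : 0 < pm := lt_trans one_pos hG.1
    have hfac : 0 ≤ 1 + pm * x := by positivity
    have h1 : (0:ℝ) < a * Real.exp (n * x) := by positivity
    have h2 : a * Real.exp (n * x) ≤ a * Real.exp ((n+1) * x) := by
      apply mul_le_mul_of_nonneg_left _ ha.le
      apply Real.exp_le_exp.2; nlinarith
    have hstep := step_lemma hY hG h1 h2
    have hlog : Real.log (a * Real.exp (((n:ℝ)+1) * x)) - Real.log (a * Real.exp (n * x)) = x := by
      rw [Real.log_mul (ne_of_gt ha) (Real.exp_ne_zero _),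
          Real.log_mul (ne_of_gt ha) (Real.exp_ne_zero _), Real.log_exp, Real.log_exp]
      ring
    rw [hlog] at hstep
    push_cast
    calc (1 + pm * x) ^ (n + 1) * G a = (1 + pm * x) * ((1 + pm * x) ^ n * G a) := by ring
      _ ≤ (1 + pm * x) * G (a * Real.exp (n * x)) := by
          exact mul_le_mul_of_nonneg_left ih hfac
      _ ≤ G (a * Real.exp (((n:ℝ)+1) * x)) := hstep

lemma power_lemma (hY : IsYoungPair G g) (hG : GrowthCond G g pm pp) {a b : ℝ} (ha : 0 < a) (hab : a ≤ b) :
    (b / a) ^ pm * G a ≤ G b := by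
  have hb : 0 < b := lt_of_lt_of_le ha hab
  set x := Real.log (b / a) with hxdef
  have hx : 0 ≤ x := Real.log_nonneg (by rw [le_div_iff₀ ha]; linarith)
  have hlim : Tendsto (fun n : ℕ => (1 + pm * x / n) ^ n * G a) atTop
      (𝓝 (Real.exp (pm * x) * G a)) := by
    exact (Real.tendsto_one_add_div_pow_exp (pm * x)).mul_const (G a)
  have hbd : ∀ n : ℕ, (1 + pm * x / n) ^ n * G a ≤ G b := by
    intro n
    rcases Nat.eq_zero_or_pos n with h0 | hn
    · subst h0; simpa using G_mono hY a b ha.le hab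
    · have hn' : (0:ℝ) < n := by exact_mod_cast hn
      have hxn : 0 ≤ x / n := by positivity
      have := iter_lemma hY hG n ha hxn
      have hb' : a * Real.exp ((n:ℝ) * (x / n)) = b := by
        rw [mul_div_cancel₀ _ (ne_of_gt hn'), hxdef, Real.exp_log (by positivity)]
        field_simp
      rw [hb'] at this
      calc (1 + pm * x / n) ^ n * G a = (1 + pm * (x / n)) ^ n * G a := by
            rw [mul_div_assoc]
        _ ≤ G b := this
  have := le_of_tendsto hlim (Filter.Eventually.of_forall hbd)
  calc (b / a) ^ pm * G a = Real.exp (pm * x) * G a := by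
        rw [Real.rpow_def_of_pos (by positivity), mul_comm pm x]
    _ ≤ G b := this

lemma key_lemma (hY : IsYoungPair G g) (hG : GrowthCond G g pm pp) {lam t : ℝ} (hl0 : 0 < lam) (hl1 : lam ≤ 1) (ht : 0 ≤ t) :
    G (lam * t) ≤ lam ^ pm * G t := by
  rcases eq_or_lt_of_le ht with h0 | ht
  · have := Real.rpow_pos_of_pos hl0 pm
    simp only [← h0, mul_zero, G_zero hY]
    positivity
  · have h := power_lemma hY hG (a := lam * t) (b := t) (by positivity)
      (by nlinarith)
    have hq : (t / (lam * t)) ^ pm = lam⁻¹ ^ pm := by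
      congr 1; field_simp
    rw [hq] at h
    have hpow : lam⁻¹ ^ pm = (lam ^ pm)⁻¹ := Real.inv_rpow hl0.le pm
    rw [hpow] at h
    have hlp : 0 < lam ^ pm := Real.rpow_pos_of_pos hl0 pm
    calc G (lam * t) = lam ^ pm * ((lam ^ pm)⁻¹ * G (lam * t)) := by
          field_simp
      _ ≤ lam ^ pm * G t := mul_le_mul_of_nonneg_left h hlp.le

end aux

lemma segment_meets_frontier {E : Type*} [NormedAddCommGroup E] [NormedSpace ℝ E]
    {Ω : Set E} (hΩopen : IsOpen Ω) {x y : E} (hx : x ∈ Ω) (hy : y ∈ Ωᶜ) :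
    ∃ z ∈ segment ℝ x y, z ∈ frontier Ω := by
  by_contra hc
  push_neg at hc
  have hS : IsPreconnected (segment ℝ x y) := (convex_segment x y).isPreconnected
  have hyc : y ∉ closure Ω := by
    intro h
    exact hc y (right_mem_segment ℝ x y) ⟨h, by rwa [hΩopen.interior_eq]⟩
  have hsub : segment ℝ x y ⊆ Ω ∪ (closure Ω)ᶜ := by
    intro z hz
    by_cases h : z ∈ closure Ω
    · left
      by_contra hzo
      exact hc z hz ⟨h, by rwa [hΩopen.interior_eq]⟩
    · right; exact h
  have h1 : (segment ℝ x y ∩ Ω).Nonempty := ⟨x, left_mem_segment ℝ x y, hx⟩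
  have h2 : (segment ℝ x y ∩ (closure Ω)ᶜ).Nonempty := ⟨y, right_mem_segment ℝ x y, hyc⟩
  obtain ⟨z, _, hz1, hz2⟩ := hS Ω (closure Ω)ᶜ hΩopen (isClosed_closure.isOpen_compl)
    hsub h1 h2
  exact hz2 (subset_closure hz1)

lemma infDist_frontier_le_dist {E : Type*} [NormedAddCommGroup E] [NormedSpace ℝ E]
    {Ω : Set E} (hΩopen : IsOpen Ω) {x y : E} (hx : x ∈ Ω) (hy : y ∈ Ωᶜ) :
    infDist x (frontier Ω) ≤ dist x y := by
  obtain ⟨z, hzseg, hzf⟩ := segment_meets_frontier hΩopen hx hy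
  have h1 : infDist x (frontier Ω) ≤ dist x z := infDist_le_dist_of_mem hzf
  have h2 : dist x z + dist z y = dist x y := dist_add_dist_of_mem_segment hzseg
  have := dist_nonneg (x := z) (y := y)
  linarith

/-- the mixed `Ω × (ℝ^N ∖ Ω)` term is controlled by the Hardy-type
integral `∫_Ω G(u/δ^s)` with the same constant `c₁`. -/
theorem mixed_term_le_hardy_integral
    {N : ℕ} (hN : 1 ≤ N) {s : ℝ} (hs : s ∈ Set.Ioo (0 : ℝ) 1)
    {G g : ℝ → ℝ} (hY : IsYoungPair G g) {pm pp : ℝ} (hG : GrowthCond G g pm pp)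
    {Ω : Set (EuclideanSpace ℝ (Fin N))} (hΩopen : IsOpen Ω) (hΩne : Ω.Nonempty)
    (hΩproper : Ω ≠ Set.univ)
    {c₁ : ℝ} (hc₁ : 0 < c₁)
    (hi : ∀ x ∈ Ω,
      (∫⁻ y in Ωᶜ, ENNReal.ofReal (dist x y ^ (-((N : ℝ) + s * pm)))) ≤
        ENNReal.ofReal (c₁ * infDist x (frontier Ω) ^ (-(s * pm))))
    {u : EuclideanSpace ℝ (Fin N) → ℝ} (hmeas : Measurable u) (hpos : ∀ x, 0 ≤ u x)
    (hzero : ∀ x ∈ Ωᶜ, u x = 0) :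
    (∫⁻ x in Ω, ∫⁻ y in Ωᶜ,
        ENNReal.ofReal (G (u x / dist x y ^ s) / dist x y ^ (N : ℝ))) ≤
      ENNReal.ofReal c₁ *
        ∫⁻ x in Ω, ENNReal.ofReal (G (u x / infDist x (frontier Ω) ^ s)) := by
  obtain ⟨hs0, hs1⟩ := hs
  have hfront : (frontier Ω).Nonempty := nonempty_frontier_iff.2 ⟨hΩne, hΩproper⟩
  rw [← lintegral_const_mul' (ENNReal.ofReal c₁) _ ENNReal.ofReal_ne_top]
  apply setLIntegral_mono' hΩopen.measurableSet
  intro x hx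
  set δ := infDist x (frontier Ω) with hδdef
  have hxnf : x ∉ frontier Ω := by
    rw [hΩopen.frontier_eq]
    exact fun h => h.2 hx
  have hδ : 0 < δ := (isClosed_frontier.notMem_iff_infDist_pos hfront).1 hxnf
  set v := u x with hvdef
  have hv : 0 ≤ v := hpos x
  set K := G (v / δ ^ s) with hKdef
  have hK : 0 ≤ K := G_nonneg hY _ (by positivity)
  have hpt : ∀ y ∈ Ωᶜ,
      ENNReal.ofReal (G (v / dist x y ^ s) / dist x y ^ (N : ℝ)) ≤
      ENNReal.ofReal (δ ^ (s * pm) * K) *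
        ENNReal.ofReal (dist x y ^ (-((N : ℝ) + s * pm))) := by
    intro y hy
    have hr : δ ≤ dist x y := infDist_frontier_le_dist hΩopen hx hy
    have hr0 : 0 < dist x y := lt_of_lt_of_le hδ hr
    set r := dist x y with hrdef
    have hlam0 : 0 < (δ / r) ^ s := Real.rpow_pos_of_pos (by positivity) s
    have hlam1 : (δ / r) ^ s ≤ 1 :=
      Real.rpow_le_one (by positivity) ((div_le_one hr0).2 hr) hs0.le
    have harg : (δ / r) ^ s * (v / δ ^ s) = v / r ^ s := by
      rw [Real.div_rpow hδ.le hr0.le]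
      have h1 : (0:ℝ) < δ ^ s := Real.rpow_pos_of_pos hδ s
      have h2 : (0:ℝ) < r ^ s := Real.rpow_pos_of_pos hr0 s
      field_simp
    have hkey := key_lemma hY hG hlam0 hlam1 (t := v / δ ^ s) (by positivity)
    rw [harg] at hkey
    have hpow : ((δ / r) ^ s) ^ pm = δ ^ (s * pm) * r ^ (-(s * pm)) := by
      rw [← Real.rpow_mul (by positivity : (0:ℝ) ≤ δ / r) s pm,
        Real.div_rpow hδ.le hr0.le, Real.rpow_neg hr0.le, div_eq_mul_inv]
    rw [hpow] at hkey
    rw [← ENNReal.ofReal_mul (by positivity)]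
    apply ENNReal.ofReal_le_ofReal
    have hrN : (0:ℝ) < r ^ (N : ℝ) := Real.rpow_pos_of_pos hr0 _
    have hsplit : r ^ (-((N : ℝ) + s * pm)) = (r ^ (N : ℝ))⁻¹ * r ^ (-(s * pm)) := by
      rw [show -((N : ℝ) + s * pm) = (-(N : ℝ)) + (-(s * pm)) by ring,
        Real.rpow_add hr0, Real.rpow_neg hr0.le (N : ℝ)]
    rw [hsplit, div_le_iff₀ hrN]
    have hrsp : (0:ℝ) < r ^ (-(s * pm)) := Real.rpow_pos_of_pos hr0 _
    calc G (v / r ^ s) ≤ δ ^ (s * pm) * r ^ (-(s * pm)) * K := hkey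
      _ = δ ^ (s * pm) * K * ((r ^ (N : ℝ))⁻¹ * r ^ (-(s * pm))) * r ^ (N : ℝ) := by
          field_simp
  calc (∫⁻ y in Ωᶜ, ENNReal.ofReal (G (v / dist x y ^ s) / dist x y ^ (N : ℝ)))
      ≤ ∫⁻ y in Ωᶜ, ENNReal.ofReal (δ ^ (s * pm) * K) *
          ENNReal.ofReal (dist x y ^ (-((N : ℝ) + s * pm))) :=
        setLIntegral_mono' hΩopen.isClosed_compl.measurableSet hpt
    _ = ENNReal.ofReal (δ ^ (s * pm) * K) *
          ∫⁻ y in Ωᶜ, ENNReal.ofReal (dist x y ^ (-((N : ℝ) + s * pm))) :=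
        lintegral_const_mul' _ _ ENNReal.ofReal_ne_top
    _ ≤ ENNReal.ofReal (δ ^ (s * pm) * K) * ENNReal.ofReal (c₁ * δ ^ (-(s * pm))) :=
        mul_le_mul_right (hi x hx) _
    _ = ENNReal.ofReal c₁ * ENNReal.ofReal K := by
        rw [← ENNReal.ofReal_mul (by positivity), ← ENNReal.ofReal_mul hc₁.le]
        congr 1
        have h1 : δ ^ (s * pm) * δ ^ (-(s * pm)) = 1 := by
          rw [← Real.rpow_add hδ]; simp
        linear_combination (c₁ * K) * h1
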